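/- Fix α ∈ (0,1], x > c ≥ 1 and y ≤ c. The function g(t) = (t/(x − (1−t)y))^α is concave on (0,1); consequently g(λ) + g(1−λ) is increasing in λ on (0, 1/2]. -/

import Mathlib

open MeasureTheory ProbabilityTheory Real Finset

noncomputable section

variable {Ω : Type*} [MeasurableSpace Ω]

/-- `X ~ Pareto(α)` : cdf `1 - x^(-α)` for `x ≥ 1`. -/
def IsPareto (P : Measure Ω) (α : ℝ) (X : Ω → ℝ) : Prop :=
  Measurable X ∧ (∀ x : ℝ, 1 ≤ x → P {ω | x < X ω} = ENNReal.ofReal (x ^ (-α))) ∧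
    P {ω | X ω < 1} = 0

/-- the increasing rearrangement of a vector -/
def sortedVec {n : ℕ} (f : Fin n → ℝ) : Fin n → ℝ := f ∘ Tuple.sort f

/-- `MajorizedBy θ η` : `θ ⪯ η`, i.e. equal sums and the sum of the `k` smallest
components of `θ` is at least that of `η` for each `k`. -/
def MajorizedBy {n : ℕ} (θ η : Fin n → ℝ) : Prop :=
  (∑ i, θ i = ∑ i, η i) ∧
  ∀ k : ℕ, k ≤ n →
    ∑ i ∈ Finset.univ.filter (fun i : Fin n => (i : ℕ) < k), sortedVec η i ≤
    ∑ i ∈ Finset.univ.filter (fun i : Fin n => (i : ℕ) < k), sortedVec θ i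

/-!
`t ↦ t / (x - (1 - t) y) = t / ((x - y) + y t)` is a concave increasing function of `t ≥ 0`,
and `u ↦ u ^ α` is concave and increasing on `u ≥ 0` for `α ∈ [0, 1]`, so their composite `g` is
concave. For `l₁ < l₂ ≤ 1/2` the pair `(l₂, 1 - l₂)` lies inside `[l₁, 1 - l₁]` with the same sum,
so concavity gives `g l₁ + g (1 - l₁) ≤ g l₂ + g (1 - l₂)`.
-/

theorem ConcaveOn.comp_of_mapsTo {𝕜 E β γ : Type*} [Semiring 𝕜] [PartialOrder 𝕜]
    [AddCommMonoid E] [SMul 𝕜 E] [AddCommMonoid β] [PartialOrder β] [SMul 𝕜 β]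
    [AddCommMonoid γ] [PartialOrder γ] [SMul 𝕜 γ] {s : Set E} {t : Set β} {f : E → β}
    {g : β → γ} (hg : ConcaveOn 𝕜 t g) (hf : ConcaveOn 𝕜 s f) (hst : Set.MapsTo f s t)
    (hg' : MonotoneOn g t) : ConcaveOn 𝕜 s (g ∘ f) :=
  ⟨hf.1, fun _ hx _ hy _ _ ha hb hab =>
    (hg.2 (hst hx) (hst hy) ha hb hab).trans <|
      hg' (hg.1 (hst hx) (hst hy) ha hb hab) (hst (hf.1 hx hy ha hb hab))
        (hf.2 hx hy ha hb hab)⟩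

theorem ConcaveOn.add_le_add_of_add_eq {𝕜 : Type*} [Field 𝕜] [LinearOrder 𝕜]
    [IsStrictOrderedRing 𝕜] {s : Set 𝕜} {f : 𝕜 → 𝕜} (hf : ConcaveOn 𝕜 s f) {a b c d : 𝕜}
    (ha : a ∈ s) (hd : d ∈ s) (hab : a ≤ b) (hbd : b ≤ d) (hsum : a + d = b + c) :
    f a + f d ≤ f b + f c := by
  obtain had | had := (hab.trans hbd).eq_or_lt
  · subst had
    obtain rfl : b = a := le_antisymm hbd hab
    obtain rfl : c = b := by linarith
    exact le_rfl
  set t := (d - b) / (d - a)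
  have ht₀ : 0 ≤ t := div_nonneg (sub_nonneg.2 hbd) (sub_pos.2 had).le
  have ht₁ : 0 ≤ 1 - t := by
    rw [sub_nonneg, div_le_one (sub_pos.2 had)]
    linarith
  have hb : t * a + (1 - t) * d = b := by
    simp only [t]
    field_simp
    ring
  have hc : (1 - t) * a + t * d = c := by
    simp only [t]
    field_simp
    linear_combination (d - a) * hsum
  have h₁ := hf.2 ha hd ht₀ ht₁ (add_sub_cancel t 1)
  have h₂ := hf.2 ha hd ht₁ ht₀ (sub_add_cancel 1 t)
  simp only [smul_eq_mul, hb, hc] at h₁ h₂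
  linarith

theorem ConcaveOn.monotoneOn_add_comp_one_sub {f : ℝ → ℝ} (hf : ConcaveOn ℝ (Set.Ioo 0 1) f) :
    MonotoneOn (fun l => f l + f (1 - l)) (Set.Ioc 0 (1 / 2)) := by
  intro l₁ ⟨hl₁, _⟩ l₂ ⟨_, hl₂⟩ hle
  exact hf.add_le_add_of_add_eq ⟨hl₁, by linarith⟩ ⟨by linarith, by linarith⟩ hle
    (by linarith) (by ring)

theorem concaveOn_Ici_div_add_mul {a b : ℝ} (ha : 0 < a) (hb : 0 ≤ b) :
    ConcaveOn ℝ (Set.Ici 0) (fun t => t / (a + b * t)) := by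
  refine ⟨convex_Ici 0, fun u (hu : 0 ≤ u) v (hv : 0 ≤ v) p q hp hq hpq => ?_⟩
  simp only [smul_eq_mul]
  rw [mul_div_assoc', mul_div_assoc', div_add_div _ _ (by positivity) (by positivity),
    div_le_div_iff₀ (by positivity) (by positivity)]
  obtain rfl : q = 1 - p := by linarith
  nlinarith [mul_nonneg (mul_nonneg (mul_nonneg (mul_nonneg ha.le hb) hp) hq)
    (sq_nonneg (u - v))]

theorem concaveOn_Ici_div_add_mul_rpow {a b α : ℝ} (ha : 0 < a) (hb : 0 ≤ b) (hα₀ : 0 ≤ α)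
    (hα₁ : α ≤ 1) : ConcaveOn ℝ (Set.Ici 0) (fun t => (t / (a + b * t)) ^ α) :=
  (Real.concaveOn_rpow hα₀ hα₁).comp_of_mapsTo (concaveOn_Ici_div_add_mul ha hb)
    (fun t (ht : 0 ≤ t) => div_nonneg ht (by positivity))
    (fun _ hu _ _ huv => Real.rpow_le_rpow hu huv hα₀)

theorem stmt_14 (α : ℝ) (hα0 : 0 < α) (hα1 : α ≤ 1)
    (c x y : ℝ) (hx : c < x) (hy0 : 0 ≤ y) (hy : y ≤ c) :
    ConcaveOn ℝ (Set.Ioo 0 1) (fun t : ℝ => (t / (x - (1 - t) * y)) ^ α) ∧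
    MonotoneOn (fun l : ℝ =>
      (l / (x - (1 - l) * y)) ^ α + ((1 - l) / (x - l * y)) ^ α)
      (Set.Ioc 0 (1 / 2 : ℝ)) := by
  have hconc : ConcaveOn ℝ (Set.Ioo 0 1) (fun t : ℝ => (t / (x - (1 - t) * y)) ^ α) := by
    have hg := concaveOn_Ici_div_add_mul_rpow (a := x - y) (by linarith) hy0 hα0.le hα1
    refine (hg.subset (fun _ ht => ht.1.le) (convex_Ioo 0 1)).congr fun t _ => by
      dsimp only
      rw [show x - (1 - t) * y = x - y + y * t by ring]
  refine ⟨hconc, ?_⟩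
  simpa only [sub_sub_cancel] using hconc.monotoneOn_add_comp_one_sub
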